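/- arXiv:2305.17920 — 2 statements merged into one kernel-verified Lean document; each statement's English description precedes it below -/
import Mathlib

section
/- Let P = P₁ ⊗ P₂ and Q = Q₁ ⊗ Q₂ be product probability measures with Pᵢ absolutely continuous with respect to Qᵢ. Then 1 + χ²(P‖Q) = (1 + χ²(P₁‖Q₁))·(1 + χ²(P₂‖Q₂)) (tensorization of the chi-square divergence). -/
open MeasureTheory

namespace MeasureTheory.Measure

variable {α β : Type*} [MeasurableSpace α] [MeasurableSpace β]
  {μ₁ ν₁ : Measure α} {μ₂ ν₂ : Measure β}
  [SigmaFinite μ₁] [SigmaFinite ν₁] [SigmaFinite μ₂] [SigmaFinite ν₂]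

lemma rnDeriv_prod (h₁ : μ₁ ≪ ν₁) (h₂ : μ₂ ≪ ν₂) :
    (μ₁.prod μ₂).rnDeriv (ν₁.prod ν₂)
      =ᵐ[ν₁.prod ν₂] fun p ↦ μ₁.rnDeriv ν₁ p.1 * μ₂.rnDeriv ν₂ p.2 := by
  have hprod : μ₁.prod μ₂
      = (ν₁.prod ν₂).withDensity fun p ↦ μ₁.rnDeriv ν₁ p.1 * μ₂.rnDeriv ν₂ p.2 := by
    conv_lhs => rw [← withDensity_rnDeriv_eq _ _ h₁, ← withDensity_rnDeriv_eq _ _ h₂]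
    exact prod_withDensity (measurable_rnDeriv _ _) (measurable_rnDeriv _ _)
  rw [hprod]
  exact rnDeriv_withDensity _ <| by fun_prop

lemma lintegral_rnDeriv_prod_pow (h₁ : μ₁ ≪ ν₁) (h₂ : μ₂ ≪ ν₂) (n : ℕ) :
    ∫⁻ p, (μ₁.prod μ₂).rnDeriv (ν₁.prod ν₂) p ^ n ∂(ν₁.prod ν₂)
      = (∫⁻ x, μ₁.rnDeriv ν₁ x ^ n ∂ν₁) * ∫⁻ y, μ₂.rnDeriv ν₂ y ^ n ∂ν₂ := by
  calc ∫⁻ p, (μ₁.prod μ₂).rnDeriv (ν₁.prod ν₂) p ^ n ∂(ν₁.prod ν₂)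
      = ∫⁻ p, μ₁.rnDeriv ν₁ p.1 ^ n * μ₂.rnDeriv ν₂ p.2 ^ n ∂(ν₁.prod ν₂) :=
        lintegral_congr_ae <| (rnDeriv_prod h₁ h₂).mono fun p hp ↦ by simp only [hp, mul_pow]
    _ = _ := lintegral_prod_mul
        ((measurable_rnDeriv _ _).pow_const n).aemeasurable
        ((measurable_rnDeriv _ _).pow_const n).aemeasurable

end MeasureTheory.Measure

/-- Tensorization of the chi-square divergence: for product probability measures
`P = P₁ ⊗ P₂ ≪ Q = Q₁ ⊗ Q₂` (componentwise), `1 + χ²(P‖Q) = (1 + χ²(P₁‖Q₁))(1 + χ²(P₂‖Q₂))`,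
expressed via `1 + χ²(P‖Q) = ∫ (dP/dQ)² dQ`. -/
theorem stmt_4 {Ω₁ Ω₂ : Type*} [MeasurableSpace Ω₁] [MeasurableSpace Ω₂]
    (P₁ Q₁ : Measure Ω₁) (P₂ Q₂ : Measure Ω₂)
    [IsProbabilityMeasure P₁] [IsProbabilityMeasure Q₁]
    [IsProbabilityMeasure P₂] [IsProbabilityMeasure Q₂]
    (h₁ : P₁ ≪ Q₁) (h₂ : P₂ ≪ Q₂) :
    ∫⁻ ω, ((P₁.prod P₂).rnDeriv (Q₁.prod Q₂) ω)^2 ∂(Q₁.prod Q₂) =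
      (∫⁻ ω, (P₁.rnDeriv Q₁ ω)^2 ∂Q₁) * (∫⁻ ω, (P₂.rnDeriv Q₂ ω)^2 ∂Q₂) :=
  Measure.lintegral_rnDeriv_prod_pow h₁ h₂ 2
end

section
/- Let Σ_Q and Σ_P be Hermitian positive definite n×n complex matrices, and suppose Ω = Σ_Q Σ_P^{−1} has eigendecomposition Ω U = U diag(ψ) where the eigenvalues satisfy ψ_m ≠ ψ_n* for all m ≠ n. Then U simultaneously diagonalizes Σ_Q and Σ_P: there exist positive real vectors λ^{(Q)}, λ^{(P)} such that Σ_Q = U diag(λ^{(Q)}) U^H and Σ_P = U diag(λ^{(P)}) U^H. -/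
open Matrix
open scoped ComplexOrder

private lemma posDef_conj_aux {n : ℕ} {A B : Matrix (Fin n) (Fin n) ℂ}
    (hA : A.PosDef) (hB : IsUnit B) : (B * A * Bᴴ).PosDef := by
  rw [Matrix.posDef_iff_dotProduct_mulVec]
  constructor
  · exact Matrix.isHermitian_mul_mul_conjTranspose B hA.1
  · intro x hx
    have hBHdet : IsUnit Bᴴ.det := by
      rw [Matrix.det_conjTranspose]
      exact ((Matrix.isUnit_iff_isUnit_det _).mp hB).star
    have hxB : Bᴴ *ᵥ x ≠ 0 := by
      intro h
      apply hx
      have h2 : (Bᴴ)⁻¹ *ᵥ (Bᴴ *ᵥ x) = x := by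
        rw [Matrix.mulVec_mulVec, Matrix.nonsing_inv_mul _ hBHdet, Matrix.one_mulVec]
      rw [h, Matrix.mulVec_zero] at h2
      exact h2.symm
    have := hA.dotProduct_mulVec_pos hxB
    simpa only [star_mulVec, Matrix.dotProduct_mulVec, Matrix.vecMul_vecMul,
      Matrix.conjTranspose_conjTranspose, Matrix.mulVec_mulVec, Matrix.mul_assoc] using this

private lemma posDef_diag_pos {n : ℕ} {A : Matrix (Fin n) (Fin n) ℂ}
    (hA : A.PosDef) (i : Fin n) : 0 < A i i := by
  have hs : star (Pi.single i 1 : Fin n → ℂ) = Pi.single i 1 := by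
    ext j; by_cases h : j = i <;> simp [Pi.single_apply, h]
  have := hA.dotProduct_mulVec_pos (x := Pi.single i 1) (by
    intro h
    have := congrFun h i
    simp at this)
  rw [hs, Matrix.mulVec_single, single_dotProduct] at this
  simpa using this

/-- Joint diagonalization: if `Σ_Q, Σ_P` are Hermitian positive definite, `Ω = Σ_Q Σ_P⁻¹`
has eigendecomposition `Ω U = U diag(ψ)` with `U` invertible and no eigenvalue equal to the
conjugate of a distinct one, then `U` simultaneously diagonalizes `Σ_Q` and `Σ_P` with
positive real diagonals. -/
theorem stmt_6 (n : ℕ) (SQ SP U : Matrix (Fin n) (Fin n) ℂ) (ψ : Fin n → ℂ)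
    (hQ : SQ.PosDef) (hP : SP.PosDef) (hU : IsUnit U)
    (hdecomp : (SQ * SP⁻¹) * U = U * Matrix.diagonal ψ)
    (hψ : ∀ m n : Fin n, m ≠ n → ψ m ≠ star (ψ n)) :
    ∃ lamQ lamP : Fin n → ℝ, (∀ i, 0 < lamQ i) ∧ (∀ i, 0 < lamP i) ∧
      SQ = U * Matrix.diagonal (fun i => (lamQ i : ℂ)) * Uᴴ ∧
      SP = U * Matrix.diagonal (fun i => (lamP i : ℂ)) * Uᴴ := by
  have hUdet : IsUnit U.det := (Matrix.isUnit_iff_isUnit_det _).mp hU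
  have hPdet : IsUnit SP.det := (Matrix.isUnit_iff_isUnit_det _).mp hP.isUnit
  have hUV : U * U⁻¹ = 1 := Matrix.mul_nonsing_inv _ hUdet
  have hVU : U⁻¹ * U = 1 := Matrix.nonsing_inv_mul _ hUdet
  have hVunit : IsUnit U⁻¹ := Matrix.isUnit_nonsing_inv_iff.mpr hU
  set V := U⁻¹ with hV
  set C := V * SP * Vᴴ with hC
  set B := V * SQ * Vᴴ with hBdef
  have hCpd : C.PosDef := posDef_conj_aux hP hVunit
  have hBpd : B.PosDef := posDef_conj_aux hQ hVunit
  have h1 : SQ * SP⁻¹ = U * Matrix.diagonal ψ * V := by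
    have h := congrArg (· * V) hdecomp
    simpa [Matrix.mul_assoc, hUV] using h
  have hSQ : SQ = U * Matrix.diagonal ψ * V * SP := by
    have h := congrArg (· * SP) h1
    simpa [Matrix.mul_assoc, Matrix.nonsing_inv_mul _ hPdet] using h
  have hB : B = Matrix.diagonal ψ * C := by
    rw [hBdef, hSQ, hC]
    calc V * (U * Matrix.diagonal ψ * V * SP) * Vᴴ
        = (V * U) * (Matrix.diagonal ψ * (V * SP * Vᴴ)) := by noncomm_ring
      _ = Matrix.diagonal ψ * (V * SP * Vᴴ) := by rw [hVU, one_mul]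
  have hDC : Matrix.diagonal ψ * C = C * Matrix.diagonal (fun i => star (ψ i)) := by
    calc Matrix.diagonal ψ * C = B := hB.symm
      _ = Bᴴ := hBpd.1.symm
      _ = Cᴴ * (Matrix.diagonal ψ)ᴴ := by rw [hB, Matrix.conjTranspose_mul]
      _ = C * Matrix.diagonal (fun i => star (ψ i)) := by
          rw [hCpd.1, Matrix.diagonal_conjTranspose]
          rfl
  have hCoff : ∀ i j : Fin n, i ≠ j → C i j = 0 := by
    intro i j hij
    have h := congrFun (congrFun hDC i) j
    rw [Matrix.diagonal_mul, Matrix.mul_diagonal] at h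
    by_contra hc
    exact hψ i j hij (mul_left_cancel₀ hc (by rw [mul_comm] at h; rw [h, mul_comm]))
  have hCdiag : C = Matrix.diagonal (fun i => C i i) := by
    ext i j
    by_cases h : i = j
    · subst h; simp
    · rw [Matrix.diagonal_apply_ne _ h]; exact hCoff i j h
  have hUHdet : IsUnit Uᴴ.det := by
    rw [Matrix.det_conjTranspose]; exact hUdet.star
  have hVH : Vᴴ = (Uᴴ)⁻¹ := Matrix.conjTranspose_nonsing_inv U
  have hSPrec : SP = U * C * Uᴴ := by
    rw [hC, hVH]
    calc SP = (U * V) * SP * ((Uᴴ)⁻¹ * Uᴴ) := by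
          rw [hUV, Matrix.nonsing_inv_mul _ hUHdet]; simp
      _ = U * (V * SP * (Uᴴ)⁻¹) * Uᴴ := by noncomm_ring
  have hSQrec : SQ = U * B * Uᴴ := by
    rw [hBdef, hVH]
    calc SQ = (U * V) * SQ * ((Uᴴ)⁻¹ * Uᴴ) := by
          rw [hUV, Matrix.nonsing_inv_mul _ hUHdet]; simp
      _ = U * (V * SQ * (Uᴴ)⁻¹) * Uᴴ := by noncomm_ring
  have hCpos : ∀ i, 0 < C i i := posDef_diag_pos hCpd
  have hBpos : ∀ i, 0 < B i i := posDef_diag_pos hBpd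
  have hBdiag : B = Matrix.diagonal (fun i => ψ i * C i i) := by
    conv_lhs => rw [hB, hCdiag]
    rw [Matrix.diagonal_mul_diagonal]
  have hBii : ∀ i, B i i = ψ i * C i i := fun i => by
    conv_lhs => rw [hBdiag]
    simp
  have hBreal : ∀ i, ((B i i).re : ℂ) = B i i := fun i => by
    have h := Complex.lt_def.mp (hBpos i)
    exact Complex.ext (by simp) (by simp [← h.2])
  have hCreal : ∀ i, ((C i i).re : ℂ) = C i i := fun i => by
    have h := Complex.lt_def.mp (hCpos i)
    exact Complex.ext (by simp) (by simp [← h.2])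
  refine ⟨fun i => (B i i).re, fun i => (C i i).re, ?_, ?_, ?_, ?_⟩
  · intro i; exact_mod_cast (Complex.lt_def.mp (hBpos i)).1
  · intro i; exact_mod_cast (Complex.lt_def.mp (hCpos i)).1
  · rw [hSQrec]
    refine congrArg (· * Uᴴ) (congrArg (U * ·) ?_)
    conv_lhs => rw [hBdiag]
    refine congrArg Matrix.diagonal (funext fun i => ?_)
    show ψ i * C i i = ((B i i).re : ℂ)
    rw [hBreal i, hBii i]
  · rw [hSPrec]
    refine congrArg (· * Uᴴ) (congrArg (U * ·) ?_)
    conv_lhs => rw [hCdiag]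
    refine congrArg Matrix.diagonal (funext fun i => ?_)
    show C i i = ((C i i).re : ℂ)
    rw [hCreal i]
end
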